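/- arXiv:2110.14074 — 4 statements merged into one kernel-verified Lean document; each statement's English description precedes it below -/
import Mathlib

section
/- Let (Ω, 𝔉, μ) be a probability space, let Gₙ, G₀ : Ω → ℝ^d be Bochner square-integrable random vectors, and let W : Ω → ℝ be a square-integrable random variable. Let θₙ, θ⁰, u ∈ ℝ^d be fixed vectors and A, C_w, C_g ≥ 0 constants such that: (i) ∫ ‖Gₙ − G₀‖² dμ ≤ A·‖θₙ − θ⁰‖²; (ii) ‖G₀(ω)‖ ≤ C_g for μ-almost every ω; (iii) ∫ (1 − W)² dμ ≤ C_w·‖θₙ − θ⁰‖². Define Jₙ := ∫ Gₙ dμ, J₀ := ∫ W·G₀ dμ, e := u − J₀, and the random vector v := Gₙ − W·G₀ + u. Then ∫ ‖v‖² dμ ≤ (2A + 2C_g²·C_w)·‖θₙ − θ⁰‖² + 2‖Jₙ‖² + 2‖e‖². -/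
/-!
Write `v = X + u` with `X = Gₙ − W • G₀`. The bias–variance identity
`𝔼‖X + u‖² = (𝔼‖X‖² − ‖𝔼X‖²) + ‖𝔼X + u‖²` separates a fluctuation term from a mean term.
Since `X = (Gₙ − G₀) + (1 − W) • G₀` and `G₀` is bounded, `𝔼‖X‖²` is controlled by hypotheses
(i) and (iii); and `𝔼X + u = Jₙ + e`, so the mean term is at most `2‖Jₙ‖² + 2‖e‖²`.
-/

open MeasureTheory

lemma norm_add_sq_le_two_mul {E : Type*} [SeminormedAddGroup E] (a b : E) :
    ‖a + b‖ ^ 2 ≤ 2 * ‖a‖ ^ 2 + 2 * ‖b‖ ^ 2 :=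
  calc ‖a + b‖ ^ 2 ≤ (‖a‖ + ‖b‖) ^ 2 := by gcongr; exact norm_add_le a b
    _ ≤ 2 * (‖a‖ ^ 2 + ‖b‖ ^ 2) := add_sq_le
    _ = 2 * ‖a‖ ^ 2 + 2 * ‖b‖ ^ 2 := mul_add _ _ _

section SecondMoment

variable {Ω E : Type*} [MeasurableSpace Ω] {μ : Measure Ω}

lemma integral_norm_add_const_sq [IsProbabilityMeasure μ] [NormedAddCommGroup E]
    [InnerProductSpace ℝ E] [CompleteSpace E] {X : Ω → E} (hX : MemLp X 2 μ) (u : E) :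
    ∫ ω, ‖X ω + u‖ ^ 2 ∂μ =
      (∫ ω, ‖X ω‖ ^ 2 ∂μ - ‖∫ ω, X ω ∂μ‖ ^ 2) + ‖∫ ω, X ω ∂μ + u‖ ^ 2 := by
  have hXsq : Integrable (fun ω => ‖X ω‖ ^ 2) μ := hX.integrable_norm_pow two_ne_zero
  have hinner : Integrable (fun ω => 2 * inner ℝ u (X ω)) μ :=
    ((hX.integrable one_le_two).const_inner u).const_mul 2
  have hsum : Integrable (fun ω => ‖X ω‖ ^ 2 + 2 * inner ℝ u (X ω)) μ := hXsq.add hinner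
  simp_rw [norm_add_sq_real _ u, real_inner_comm u]
  rw [integral_add hsum (integrable_const _), integral_add hXsq hinner,
    integral_const_mul, integral_inner (hX.integrable one_le_two), integral_const,
    probReal_univ, one_smul]
  ring

lemma integral_norm_sub_smul_sq_le [IsFiniteMeasure μ] [NormedAddCommGroup E] [NormedSpace ℝ E]
    {Gn G0 : Ω → E} {W : Ω → ℝ} {C : ℝ} (hGn : MemLp Gn 2 μ) (hG0 : MemLp G0 2 μ)
    (hW : MemLp W 2 μ) (hG0C : ∀ᵐ ω ∂μ, ‖G0 ω‖ ≤ C) :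
    ∫ ω, ‖Gn ω - W ω • G0 ω‖ ^ 2 ∂μ ≤
      2 * ∫ ω, ‖Gn ω - G0 ω‖ ^ 2 ∂μ + 2 * C ^ 2 * ∫ ω, (1 - W ω) ^ 2 ∂μ := by
  have hdiff : Integrable (fun ω => ‖Gn ω - G0 ω‖ ^ 2) μ :=
    (hGn.sub hG0).integrable_norm_pow two_ne_zero
  have hweight : Integrable (fun ω => (1 - W ω) ^ 2) μ := ((memLp_const 1).sub hW).integrable_sq
  have hpointwise : ∀ᵐ ω ∂μ, ‖Gn ω - W ω • G0 ω‖ ^ 2 ≤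
      2 * ‖Gn ω - G0 ω‖ ^ 2 + 2 * C ^ 2 * (1 - W ω) ^ 2 := by
    filter_upwards [hG0C] with ω hω
    have hsplit : Gn ω - W ω • G0 ω = (Gn ω - G0 ω) + (1 - W ω) • G0 ω := by
      rw [sub_smul, one_smul]; abel
    have hweighted : ‖(1 - W ω) • G0 ω‖ ^ 2 ≤ C ^ 2 * (1 - W ω) ^ 2 := by
      rw [norm_smul, Real.norm_eq_abs, mul_pow, sq_abs, mul_comm]
      gcongr
    rw [hsplit]
    linarith [norm_add_sq_le_two_mul (Gn ω - G0 ω) ((1 - W ω) • G0 ω)]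
  rw [← integral_const_mul, ← integral_const_mul, ← integral_add (hdiff.const_mul _)
    (hweight.const_mul _)]
  exact integral_mono_of_nonneg (.of_forall fun ω => by positivity)
    ((hdiff.const_mul _).add (hweight.const_mul _)) hpointwise

end SecondMoment

theorem semi_stochastic_gradient_second_moment_general
    {Ω : Type*} [MeasurableSpace Ω] (μ : Measure Ω) [IsProbabilityMeasure μ]
    {d : ℕ} (Gn G0 : Ω → EuclideanSpace ℝ (Fin d)) (W : Ω → ℝ)
    (hGn : MemLp Gn 2 μ) (hG0 : MemLp G0 2 μ) (hW : MemLp W 2 μ)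
    (θn θ0 u : EuclideanSpace ℝ (Fin d)) (A Cw Cg : ℝ)
    (h1 : ∫ ω, ‖Gn ω - G0 ω‖ ^ 2 ∂μ ≤ A * ‖θn - θ0‖ ^ 2)
    (h2 : ∀ᵐ ω ∂μ, ‖G0 ω‖ ≤ Cg)
    (h3 : ∫ ω, (1 - W ω) ^ 2 ∂μ ≤ Cw * ‖θn - θ0‖ ^ 2) :
    ∫ ω, ‖Gn ω - W ω • G0 ω + u‖ ^ 2 ∂μ ≤
      (2 * A + 2 * Cg ^ 2 * Cw) * ‖θn - θ0‖ ^ 2 +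
        2 * ‖∫ ω, Gn ω ∂μ‖ ^ 2 + 2 * ‖u - ∫ ω, W ω • G0 ω ∂μ‖ ^ 2 := by
  have hWG0 : MemLp (fun ω => W ω • G0 ω) 2 μ := (memLp_top_of_bound hG0.1 Cg h2).smul hW
  have hmean : ∫ ω, Gn ω - W ω • G0 ω ∂μ + u =
      ∫ ω, Gn ω ∂μ + (u - ∫ ω, W ω • G0 ω ∂μ) := by
    rw [integral_sub (hGn.integrable one_le_two) (hWG0.integrable one_le_two)]
    abel
  have hX : MemLp (fun ω => Gn ω - W ω • G0 ω) 2 μ := hGn.sub hWG0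
  have hfluct := integral_norm_sub_smul_sq_le hGn hG0 hW h2
  rw [integral_norm_add_const_sq hX u, hmean]
  nlinarith [norm_add_sq_le_two_mul (∫ ω, Gn ω ∂μ) (u - ∫ ω, W ω • G0 ω ∂μ),
    sq_nonneg ‖∫ ω, Gn ω - W ω • G0 ω ∂μ‖, sq_nonneg Cg]

/-- Second-moment bound for the semi-stochastic (SCSG-corrected) gradient
`v = Gₙ − W·G₀ + u` (paper's Lemma B.3). -/
theorem semi_stochastic_gradient_second_moment
    {Ω : Type*} [MeasurableSpace Ω] (μ : Measure Ω) [IsProbabilityMeasure μ]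
    {d : ℕ} (Gn G0 : Ω → EuclideanSpace ℝ (Fin d)) (W : Ω → ℝ)
    (hGn : MemLp Gn 2 μ) (hG0 : MemLp G0 2 μ) (hW : MemLp W 2 μ)
    (θn θ0 u : EuclideanSpace ℝ (Fin d)) (A Cw Cg : ℝ)
    (hA : 0 ≤ A) (hCw : 0 ≤ Cw) (hCg : 0 ≤ Cg)
    (h1 : ∫ ω, ‖Gn ω - G0 ω‖ ^ 2 ∂μ ≤ A * ‖θn - θ0‖ ^ 2)
    (h2 : ∀ᵐ ω ∂μ, ‖G0 ω‖ ≤ Cg)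
    (h3 : ∫ ω, (1 - W ω) ^ 2 ∂μ ≤ Cw * ‖θn - θ0‖ ^ 2) :
    ∫ ω, ‖Gn ω - W ω • G0 ω + u‖ ^ 2 ∂μ ≤
      (2 * A + 2 * Cg ^ 2 * Cw) * ‖θn - θ0‖ ^ 2 +
        2 * ‖∫ ω, Gn ω ∂μ‖ ^ 2 + 2 * ‖u - ∫ ω, W ω • G0 ω ∂μ‖ ^ 2 :=
  semi_stochastic_gradient_second_moment_general μ Gn G0 W hGn hG0 hW θn θ0 u A Cw Cg h1 h2 h3
end

section
/- Let Y₁, …, Y_B be independent ℝ^d-valued random vectors on a probability space, each Bochner integrable with common mean m = E[Yᵢ], and suppose ‖Yᵢ − m‖ ≤ σ almost surely for every i, where σ ≥ 0 and B ≥ 1. Then for every δ ∈ (0,1), P[ ‖(1/B)·∑_{i=1}^{B} Yᵢ − m‖ ≤ σ·√(2·log(2/δ)/B) ] ≥ 1 − δ. -/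
/-!
Pinelis' argument for Hoeffding's inequality in a Hilbert space. Since `t ↦ cosh √t` is convex, for
`‖w‖ ≤ σ` the value `cosh (λ‖x + w‖)` lies below the chord through `cosh (λ(‖x‖ - σ))` and
`cosh (λ(‖x‖ + σ))`, which is `cosh (λ‖x‖) cosh (λσ)` plus a term linear in `w`. When `w` is a
mean-zero increment independent of the partial sum `x`, the linear term averages out, so
`E cosh (λ‖Sₙ‖) ≤ cosh (λσ) ^ n ≤ exp (nλ²σ²/2)`. Markov's inequality with
`cosh (λt) ≥ exp (λt) / 2` and `λ = t / (nσ²)` gives `P (‖Sₙ‖ ≥ t) ≤ 2 exp (-t² / (2nσ²))`, which is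
`δ` at `t = σ √(2n log (2/δ))`, i.e. at radius `σ √(2 log (2/δ) / n)` for the mean.
-/

open MeasureTheory ProbabilityTheory Real

namespace Real

lemma sinh_le_mul_cosh {x : ℝ} (hx : 0 ≤ x) : sinh x ≤ x * cosh x := by
  rcases hx.eq_or_lt with rfl | hx
  · simp
  obtain ⟨c, hc, hslope⟩ := exists_hasDerivAt_eq_slope sinh cosh hx continuous_sinh.continuousOn
    fun y _ => hasDerivAt_sinh y
  rw [sinh_zero, sub_zero, sub_zero, eq_div_iff hx.ne'] at hslope
  rw [← hslope, mul_comm]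
  gcongr
  rw [cosh_le_cosh, abs_of_pos hc.1, abs_of_pos hx]
  exact hc.2.le

lemma convexOn_cosh_sqrt : ConvexOn ℝ (Set.Ici 0) fun t => cosh √t := by
  refine convexOn_of_hasDerivWithinAt2_nonneg (convex_Ici 0)
    (f' := fun t => sinh √t / (2 * √t))
    (f'' := fun t => (√t * cosh √t - sinh √t) / (4 * t * √t))
    (continuous_cosh.comp continuous_sqrt).continuousOn ?_ ?_ ?_
  all_goals
    intro t ht
    rw [interior_Ici, Set.mem_Ioi] at ht
    have hsqrt : 0 < √t := Real.sqrt_pos.2 ht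
  · have h : HasDerivAt (fun t => cosh √t) _ t :=
      (hasDerivAt_cosh √t).comp t (hasDerivAt_sqrt ht.ne')
    exact (h.congr_deriv (by ring)).hasDerivWithinAt
  · have h : HasDerivAt (fun t => sinh √t / (2 * √t)) _ t :=
      ((hasDerivAt_sinh √t).comp t (hasDerivAt_sqrt ht.ne')).div
        ((hasDerivAt_sqrt ht.ne').const_mul 2) (by positivity)
    refine (h.congr_deriv ?_).hasDerivWithinAt
    simp only [Function.comp_apply]
    field_simp
    rw [sq_sqrt ht.le]
    ring
  · have := sinh_le_mul_cosh hsqrt.le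
    exact div_nonneg (by linarith) (by positivity)

lemma cosh_sqrt_le {a b s v : ℝ} (hs : |s| ≤ 1) (hv : v ≤ a ^ 2 + b ^ 2 + 2 * a * b * s) :
    cosh √v ≤ cosh a * cosh b + s * (sinh a * sinh b) := by
  -- `a² + b² + 2abs` is the convex combination of `(a - b)²` and `(a + b)²` with weights
  -- `(1 - s) / 2` and `(1 + s) / 2`.
  obtain ⟨hs₁, hs₂⟩ := abs_le.1 hs
  have hθ₀ : 0 ≤ (1 - s) / 2 := by linarith
  have hθ₁ : 0 ≤ (1 + s) / 2 := by linarith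
  have hchord := convexOn_cosh_sqrt.2 (sq_nonneg (a - b)) (sq_nonneg (a + b)) hθ₀ hθ₁ (by ring)
  simp only [smul_eq_mul, sqrt_sq_eq_abs, cosh_abs, cosh_sub, cosh_add] at hchord
  calc cosh √v ≤ cosh √((1 - s) / 2 * (a - b) ^ 2 + (1 + s) / 2 * (a + b) ^ 2) := by
        rw [cosh_le_cosh, abs_of_nonneg (sqrt_nonneg _), abs_of_nonneg (sqrt_nonneg _)]
        exact sqrt_le_sqrt (by linarith)
    _ ≤ _ := hchord
    _ = cosh a * cosh b + s * (sinh a * sinh b) := by ring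

end Real

lemma ofReal_one_sub_le_measure_of_compl_le {α : Type*} [MeasurableSpace α] {μ : Measure α}
    [IsProbabilityMeasure μ] {s : Set α} {δ : ℝ} (hδ : 0 ≤ δ) (h : μ sᶜ ≤ ENNReal.ofReal δ) :
    ENNReal.ofReal (1 - δ) ≤ μ s := by
  rw [ENNReal.ofReal_sub 1 hδ, ENNReal.ofReal_one, tsub_le_iff_right]
  calc 1 = μ Set.univ := measure_univ.symm
    _ ≤ μ s + μ sᶜ := measure_univ_le_add_compl s
    _ ≤ μ s + ENNReal.ofReal δ := by gcongr

section NormedAddCommGroup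

variable {E Ω ι : Type*} [NormedAddCommGroup E] [MeasurableSpace Ω] {μ : Measure Ω}
  {X : ι → Ω → E} {σ : ℝ}

lemma ae_norm_sum_le (hb : ∀ i, ∀ᵐ ω ∂μ, ‖X i ω‖ ≤ σ) (s : Finset ι) :
    ∀ᵐ ω ∂μ, ‖∑ i ∈ s, X i ω‖ ≤ s.card * σ := by
  filter_upwards [(Filter.eventually_all_finset s).2 fun i _ => hb i] with ω hω
  calc ‖∑ i ∈ s, X i ω‖ ≤ ∑ i ∈ s, ‖X i ω‖ := norm_sum_le _ _
    _ ≤ s.card * σ := by simpa using Finset.sum_le_card_nsmul s _ σ hω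

lemma integrable_cosh_mul_norm_sum [IsFiniteMeasure μ] (hX : ∀ i, AEStronglyMeasurable (X i) μ)
    (hb : ∀ i, ∀ᵐ ω ∂μ, ‖X i ω‖ ≤ σ) (l : ℝ) (s : Finset ι) :
    Integrable (fun ω => cosh (l * ‖∑ i ∈ s, X i ω‖)) μ := by
  have hS : AEStronglyMeasurable (fun ω => ∑ i ∈ s, X i ω) μ :=
    Finset.aestronglyMeasurable_fun_sum s fun i _ => hX i
  refine .of_bound (by fun_prop) (cosh (l * (s.card * σ))) ?_
  filter_upwards [ae_norm_sum_le hb s] with ω hω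
  rw [Real.norm_eq_abs, abs_of_pos (cosh_pos _), cosh_le_cosh, abs_mul, abs_mul, abs_norm]
  gcongr
  exact hω.trans (le_abs_self _)

end NormedAddCommGroup

section InnerProductSpace

variable {E : Type*} [NormedAddCommGroup E] [InnerProductSpace ℝ E]

lemma cosh_mul_norm_add_le (l : ℝ) {σ : ℝ} (x : E) {w : E} (hw : ‖w‖ ≤ σ) :
    cosh (l * ‖x + w‖) ≤ cosh (l * ‖x‖) * cosh (l * σ)
      + sinh (l * σ) / σ * inner ℝ (sinh (l * ‖x‖) • ‖x‖⁻¹ • x) w := by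
  have hinner : |inner ℝ x w| ≤ ‖x‖ * σ :=
    (abs_real_inner_le_norm x w).trans (by gcongr)
  set s := inner ℝ x w / (‖x‖ * σ)
  have hs : |s| ≤ 1 := by
    rw [abs_div]
    exact div_le_one_of_le₀ (hinner.trans (le_abs_self _)) (abs_nonneg _)
  have hsx : s * (‖x‖ * σ) = inner ℝ x w :=
    div_mul_cancel_of_imp fun h => by simpa [h] using hinner
  have hv : (l * ‖x + w‖) ^ 2 ≤ (l * ‖x‖) ^ 2 + (l * σ) ^ 2 + 2 * (l * ‖x‖) * (l * σ) * s := calc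
    (l * ‖x + w‖) ^ 2 = l ^ 2 * (‖x‖ ^ 2 + 2 * (s * (‖x‖ * σ)) + ‖w‖ ^ 2) := by
      rw [mul_pow, norm_add_sq_real, hsx]
    _ ≤ l ^ 2 * (‖x‖ ^ 2 + 2 * (s * (‖x‖ * σ)) + σ ^ 2) := by gcongr
    _ = _ := by ring
  have key := cosh_sqrt_le hs hv
  rw [sqrt_sq_eq_abs, cosh_abs] at key
  convert key using 2
  simp only [s, inner_smul_left, conj_trivial]
  ring

variable [CompleteSpace E] [MeasurableSpace E] [BorelSpace E] [SecondCountableTopology E]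
  {Ω : Type*} [MeasurableSpace Ω] {μ : Measure Ω}

lemma integral_cosh_mul_norm_add_le {U X : Ω → E} (hUX : U ⟂ᵢ[μ] X)
    (hU : AEStronglyMeasurable U μ) {l : ℝ} (hcosh : Integrable (fun ω => cosh (l * ‖U ω‖)) μ)
    (hX : Integrable X μ) (hX0 : μ[X] = 0) {σ : ℝ} (hXσ : ∀ᵐ ω ∂μ, ‖X ω‖ ≤ σ) :
    ∫ ω, cosh (l * ‖U ω + X ω‖) ∂μ ≤ cosh (l * σ) * ∫ ω, cosh (l * ‖U ω‖) ∂μ := by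
  set g : E → E := fun x => sinh (l * ‖x‖) • ‖x‖⁻¹ • x
  have hg : Measurable g := by fun_prop
  have hg_le : ∀ x, ‖g x‖ ≤ cosh (l * ‖x‖) := fun x => calc
    ‖g x‖ ≤ |sinh (l * ‖x‖)| * 1 := by
      rw [norm_smul, Real.norm_eq_abs]
      gcongr
      simpa using inv_norm_smul_mem_unitClosedBall x
    _ ≤ cosh (l * ‖x‖) := by
      rw [mul_one, abs_sinh, ← cosh_abs (l * ‖x‖)]
      exact (sinh_lt_cosh _).le
  have hgU : Integrable (fun ω => g (U ω)) μ :=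
    hcosh.mono' (hg.comp_aemeasurable hU.aemeasurable).aestronglyMeasurable
      (ae_of_all _ fun ω => hg_le (U ω))
  have hindep : (fun ω => g (U ω)) ⟂ᵢ[μ] X := hUX.comp hg measurable_id
  have hdrift : Integrable (fun ω => inner ℝ (g (U ω)) (X ω)) μ :=
    hindep.integrable_bilin hgU hX (innerSL ℝ)
  calc ∫ ω, cosh (l * ‖U ω + X ω‖) ∂μ
      ≤ ∫ ω, (cosh (l * ‖U ω‖) * cosh (l * σ) + sinh (l * σ) / σ * inner ℝ (g (U ω)) (X ω)) ∂μ :=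
        integral_mono_of_nonneg (ae_of_all _ fun _ => (cosh_pos _).le)
          ((hcosh.mul_const _).add (hdrift.const_mul _))
          (hXσ.mono fun ω hω => cosh_mul_norm_add_le l (U ω) hω)
    _ = cosh (l * σ) * ∫ ω, cosh (l * ‖U ω‖) ∂μ := by
        have hmean : ∫ ω, inner ℝ (g (U ω)) (X ω) ∂μ = 0 := by
          have := hindep.integral_bilin hgU hX (innerSL ℝ)
          rwa [hX0, map_zero] at this
        rw [integral_add (hcosh.mul_const _) (hdrift.const_mul _), integral_mul_const,
          integral_const_mul, hmean, mul_zero, add_zero, mul_comm]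

variable {ι : Type*} {X : ι → Ω → E} {σ : ℝ} [IsProbabilityMeasure μ]

lemma integral_cosh_mul_norm_sum_le (hindep : iIndepFun X μ) (hint : ∀ i, Integrable (X i) μ)
    (hmean : ∀ i, μ[X i] = 0) (hb : ∀ i, ∀ᵐ ω ∂μ, ‖X i ω‖ ≤ σ) (l : ℝ) (s : Finset ι) :
    ∫ ω, cosh (l * ‖∑ i ∈ s, X i ω‖) ∂μ ≤ cosh (l * σ) ^ s.card := by
  classical
  induction s using Finset.cons_induction with
  | empty => simp
  | cons j s hj ih =>
    have hstep := integral_cosh_mul_norm_add_le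
      (hindep.indepFun_finsetSum_of_notMem₀ (fun i => (hint i).aemeasurable) hj)
      (Finset.aestronglyMeasurable_sum s fun i _ => (hint i).1)
      (by simpa using integrable_cosh_mul_norm_sum (fun i => (hint i).1) hb l s)
      (hint j) (hmean j) (hb j)
    simp only [Finset.sum_apply] at hstep
    simp only [Finset.sum_cons, Finset.card_cons, pow_succ', add_comm (X j _)]
    exact hstep.trans (by gcongr)

lemma measureReal_norm_sum_ge_le (hindep : iIndepFun X μ) (hint : ∀ i, Integrable (X i) μ)
    (hmean : ∀ i, μ[X i] = 0) (hb : ∀ i, ∀ᵐ ω ∂μ, ‖X i ω‖ ≤ σ) (l : ℝ) {t : ℝ}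
    (ht : 0 ≤ t) (s : Finset ι) :
    μ.real {ω | t ≤ ‖∑ i ∈ s, X i ω‖} ≤ 2 * exp (s.card * (l * σ) ^ 2 / 2 - l * t) := by
  have hmarkov := mul_meas_ge_le_integral_of_nonneg (ae_of_all _ fun _ => (cosh_pos _).le)
    (integrable_cosh_mul_norm_sum (fun i => (hint i).1) hb l s) (cosh (l * t))
  have hmgf : ∫ ω, cosh (l * ‖∑ i ∈ s, X i ω‖) ∂μ ≤ exp (s.card * (l * σ) ^ 2 / 2) := calc
    _ ≤ cosh (l * σ) ^ s.card := integral_cosh_mul_norm_sum_le hindep hint hmean hb l s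
    _ ≤ exp ((l * σ) ^ 2 / 2) ^ s.card := by gcongr; exact cosh_le_exp_half_sq _
    _ = exp (s.card * (l * σ) ^ 2 / 2) := by rw [← exp_nat_mul, mul_div_assoc]
  have hcosh : exp (l * t) / 2 ≤ cosh (l * t) := by
    rw [cosh_eq]; linarith [exp_pos (-(l * t))]
  calc μ.real {ω | t ≤ ‖∑ i ∈ s, X i ω‖}
      ≤ μ.real {ω | cosh (l * t) ≤ cosh (l * ‖∑ i ∈ s, X i ω‖)} := by
        refine measureReal_mono fun ω hω => ?_
        simp only [Set.mem_ofPred_eq, cosh_le_cosh, abs_mul, abs_norm, abs_of_nonneg ht] at hω ⊢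
        gcongr
    _ ≤ exp (s.card * (l * σ) ^ 2 / 2) / cosh (l * t) := by
        rw [le_div_iff₀ (cosh_pos _), mul_comm]; exact hmarkov.trans hmgf
    _ ≤ exp (s.card * (l * σ) ^ 2 / 2) / (exp (l * t) / 2) := by gcongr
    _ = 2 * exp (s.card * (l * σ) ^ 2 / 2 - l * t) := by rw [exp_sub]; field_simp

lemma measure_norm_sum_gt_le (hindep : iIndepFun X μ) (hint : ∀ i, Integrable (X i) μ)
    (hmean : ∀ i, μ[X i] = 0) (hσ : 0 ≤ σ) (hb : ∀ i, ∀ᵐ ω ∂μ, ‖X i ω‖ ≤ σ) {L : ℝ} (hL : 0 ≤ L)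
    (s : Finset ι) :
    μ {ω | σ * √(2 * s.card * L) < ‖∑ i ∈ s, X i ω‖} ≤ ENNReal.ofReal (2 * exp (-L)) := by
  set n : ℝ := (s.card : ℝ)
  rcases (mul_nonneg (Nat.cast_nonneg s.card) hσ).eq_or_lt with hdeg | hpos
  · have hnull : μ {ω | σ * √(2 * n * L) < ‖∑ i ∈ s, X i ω‖} = 0 := by
      refine measure_eq_zero_iff_ae_notMem.2 ?_
      filter_upwards [ae_norm_sum_le hb s] with ω hω
      simp only [not_lt]
      exact hω.trans (hdeg ▸ by positivity)
    simp [hnull]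
  · have hn : 0 < n := pos_of_mul_pos_left hpos hσ
    have hσ' : 0 < σ := pos_of_mul_pos_right hpos (Nat.cast_nonneg s.card)
    set t := σ * √(2 * n * L)
    have ht : 0 ≤ t := by positivity
    have ht2 : t ^ 2 = σ ^ 2 * (2 * n * L) := by rw [mul_pow, sq_sqrt (by positivity)]
    clear_value t
    have hexp : n * (t / (n * σ ^ 2) * σ) ^ 2 / 2 - t / (n * σ ^ 2) * t = -L := by
      field_simp
      linear_combination -ht2
    calc μ {ω | t < ‖∑ i ∈ s, X i ω‖} ≤ μ {ω | t ≤ ‖∑ i ∈ s, X i ω‖} :=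
          measure_mono <| Set.ofPred_subset_ofPred.2 fun ω => le_of_lt
      _ = ENNReal.ofReal (μ.real {ω | t ≤ ‖∑ i ∈ s, X i ω‖}) := (ofReal_measureReal).symm
      _ ≤ ENNReal.ofReal (2 * exp (-L)) := ENNReal.ofReal_le_ofReal <| hexp ▸
          measureReal_norm_sum_ge_le hindep hint hmean hb (t / (n * σ ^ 2)) ht s

lemma measure_norm_smul_sum_sub_gt_le {Y : ι → Ω → E} (hindep : iIndepFun Y μ)
    (hint : ∀ i, Integrable (Y i) μ) {m : E} (hmean : ∀ i, μ[Y i] = m) (hσ : 0 ≤ σ)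
    (hb : ∀ i, ∀ᵐ ω ∂μ, ‖Y i ω - m‖ ≤ σ) {L : ℝ} (hL : 0 ≤ L) {s : Finset ι} (hs : s.Nonempty) :
    μ {ω | σ * √(2 * L / s.card) < ‖(s.card : ℝ)⁻¹ • ∑ i ∈ s, Y i ω - m‖} ≤
      ENNReal.ofReal (2 * exp (-L)) := by
  have hn : (0 : ℝ) < s.card := by exact_mod_cast hs.card_pos
  have hcenter (ω : Ω) :
      (s.card : ℝ)⁻¹ • ∑ i ∈ s, Y i ω - m = (s.card : ℝ)⁻¹ • ∑ i ∈ s, (Y i ω - m) := by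
    rw [Finset.sum_sub_distrib, Finset.sum_const, ← Nat.cast_smul_eq_nsmul ℝ, smul_sub, smul_smul,
      inv_mul_cancel₀ hn.ne', one_smul]
  have hscale : s.card * (σ * √(2 * L / s.card)) = σ * √(2 * s.card * L) := calc
    _ = σ * (√((s.card : ℝ) ^ 2) * √(2 * L / s.card)) := by rw [sqrt_sq hn.le]; ring
    _ = σ * √(2 * s.card * L) := by rw [← sqrt_mul (sq_nonneg _)]; congr 2; field_simp
  refine le_of_eq_of_le (congrArg μ (Set.ext fun ω => ?_)) (measure_norm_sum_gt_le
    (X := fun i ω => Y i ω - m) (hindep.comp (fun _ v => v - m) fun _ => measurable_id.sub_const m)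
    (fun i => (hint i).sub (integrable_const m))
    (fun i => by simp [integral_sub (hint i) (integrable_const m), hmean i]) hσ hb hL s)
  rw [Set.mem_ofPred_eq, Set.mem_ofPred_eq, hcenter, norm_smul,
    Real.norm_of_nonneg (inv_nonneg.2 hn.le), lt_inv_mul_iff₀ hn, hscale]

end InnerProductSpace

/-- Concentration of the batch-mean of `B` independent bounded-deviation random
vectors around their common mean (established inside the paper's Claim 3). -/
theorem batch_mean_concentration
    {Ω : Type*} [MeasurableSpace Ω] (P : Measure Ω) [IsProbabilityMeasure P]
    {d : ℕ} (B : ℕ) (hB : 1 ≤ B)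
    (Y : Fin B → Ω → EuclideanSpace ℝ (Fin d))
    (hindep : iIndepFun Y P)
    (hint : ∀ i, Integrable (Y i) P)
    (m : EuclideanSpace ℝ (Fin d)) (hmean : ∀ i, ∫ ω, Y i ω ∂P = m)
    (σ : ℝ) (hσ : 0 ≤ σ) (hbdd : ∀ i, ∀ᵐ ω ∂P, ‖Y i ω - m‖ ≤ σ)
    (δ : ℝ) (hδ0 : 0 < δ) (hδ1 : δ < 1) :
    ENNReal.ofReal (1 - δ) ≤
      P {ω | ‖(B : ℝ)⁻¹ • ∑ i, Y i ω - m‖ ≤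
        σ * Real.sqrt (2 * Real.log (2 / δ) / B)} := by
  have hL : 0 ≤ Real.log (2 / δ) := Real.log_nonneg (by rw [le_div_iff₀ hδ0]; linarith)
  have htail := measure_norm_smul_sum_sub_gt_le hindep hint hmean hσ hbdd hL
    (Finset.univ_nonempty_iff.2 ⟨⟨0, hB⟩⟩)
  rw [Real.exp_neg, Real.exp_log (by positivity), inv_div, mul_div_cancel₀ _ two_ne_zero,
    Finset.card_univ, Fintype.card_fin] at htail
  refine ofReal_one_sub_le_measure_of_compl_le hδ0.le (le_of_eq_of_le ?_ htail)
  simp only [Set.compl_ofPred, not_le]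
end

section
/- Let (Ω, 𝔉, P) be a probability space with filtration (𝔉ₙ)ₙ∈ℕ, and let (θₙ)ₙ∈ℕ be an adapted ℝ^d-valued process with θ₀ equal to a deterministic point θ⁰ ∈ ℝ^d and θ_{n+1} = θₙ + η·vₙ, where η > 0 and each vₙ is 𝔉_{n+1}-measurable and integrable. Let F : ℝ^d → ℝ^d be Borel measurable and e ∈ ℝ^d fixed, and suppose E[vₙ | 𝔉ₙ] = F(θₙ) + e almost surely for every n. Let B ≥ 1 and let N be a ℕ-valued random variable geometrically distributed with parameter Γ = B/(B+1) (i.e., P(N = n) = Γⁿ·(1−Γ) for n = 0,1,2,…), independent of the process (θₙ). Assume the integrability conditions ∑ₙ Γⁿ·E‖θₙ − θ⁰‖ < ∞ and ∑ₙ Γⁿ·E‖F(θₙ)‖ < ∞. Then η·E⟨e, F(θ_N)⟩ = (1/B)·E⟨e, θ_N − θ⁰⟩ − η·‖e‖², where θ_N denotes the random vector ω ↦ θ_{N(ω)}(ω). -/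
open MeasureTheory RealInnerProductSpace

lemma setIntegral_indep_aux {Ω : Type*} {mΩ : MeasurableSpace Ω} {P : Measure Ω}
    [IsProbabilityMeasure P] {E : Type*} [MeasurableSpace E]
    {N : Ω → ℕ} {Θ : Ω → E} (hN : Measurable N)
    (hind : ProbabilityTheory.IndepFun N Θ P) {g : E → ℝ} (hg : Measurable g)
    (hgint : Integrable (fun ω => g (Θ ω)) P) (n : ℕ) :
    ∫ ω in {ω | N ω = n}, g (Θ ω) ∂P
      = (P {ω | N ω = n}).toReal * ∫ ω, g (Θ ω) ∂P := by
  set φ : ℕ → ℝ := fun k => if k = n then 1 else 0 with hφ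
  have hφm : Measurable φ := measurable_of_countable φ
  have hind2 : ProbabilityTheory.IndepFun (φ ∘ N) (g ∘ Θ) P :=
    hind.comp hφm hg
  have hsmeas : MeasurableSet {ω | N ω = n} := hN (measurableSet_singleton n)
  have hXeq : (φ ∘ N) = Set.indicator {ω | N ω = n} (fun _ => (1 : ℝ)) := by
    funext ω
    by_cases h : N ω = n
    · simp [φ, h, Set.indicator_of_mem, Set.mem_setOf_eq]
    · simp [φ, h, Set.indicator_of_notMem, Set.mem_setOf_eq]
  have hXint : Integrable (φ ∘ N) P := by
    rw [hXeq]; exact (integrable_const (1 : ℝ)).indicator hsmeas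
  have hmul := hind2.integral_mul_eq_mul_integral hXint.aestronglyMeasurable hgint.aestronglyMeasurable
  have hle : ((φ ∘ N) * (g ∘ Θ)) = Set.indicator {ω | N ω = n} (fun ω => g (Θ ω)) := by
    funext ω
    by_cases h : N ω = n
    · simp [φ, h, Set.indicator_of_mem, Set.mem_setOf_eq, Function.comp]
    · simp [φ, h, Set.indicator_of_notMem, Set.mem_setOf_eq, Function.comp]
  rw [hle] at hmul
  rw [integral_indicator hsmeas] at hmul
  rw [hmul, hXeq, integral_indicator_const (1 : ℝ) hsmeas]
  simp only [smul_eq_mul, mul_one]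
  rfl

lemma integral_comp_rand_index {Ω : Type*} {mΩ : MeasurableSpace Ω} {P : Measure Ω}
    [IsProbabilityMeasure P] {E : Type*} [MeasurableSpace E]
    {N : Ω → ℕ} {Θ : Ω → E} (hN : Measurable N)
    (hind : ProbabilityTheory.IndepFun N Θ P) (g : ℕ → E → ℝ)
    (hg : ∀ n, Measurable (g n)) (hgint : ∀ n, Integrable (fun ω => g n (Θ ω)) P)
    (hsum : Summable (fun n => (P {ω | N ω = n}).toReal * ∫ ω, ‖g n (Θ ω)‖ ∂P)) :
    ∫ ω, g (N ω) (Θ ω) ∂P = ∑' n, (P {ω | N ω = n}).toReal * ∫ ω, g n (Θ ω) ∂P := by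
  set s : ℕ → Set Ω := fun n => {ω | N ω = n} with hs
  have hsmeas : ∀ n, MeasurableSet (s n) := fun n => hN (measurableSet_singleton n)
  set f : ℕ → Ω → ℝ := fun n => (s n).indicator (fun ω => g n (Θ ω)) with hf
  have hfint : ∀ n, Integrable (f n) P := fun n => (hgint n).indicator (hsmeas n)
  have hnorm : ∀ n, ∫ ω, ‖f n ω‖ ∂P = (P (s n)).toReal * ∫ ω, ‖g n (Θ ω)‖ ∂P := by
    intro n
    have : ∀ ω, ‖f n ω‖ = (s n).indicator (fun ω => ‖g n (Θ ω)‖) ω := by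
      intro ω; exact norm_indicator_eq_indicator_norm _ _
    rw [integral_congr_ae (Filter.Eventually.of_forall this), integral_indicator (hsmeas n)]
    exact setIntegral_indep_aux hN hind (hg n).norm (hgint n).norm n
  have hsum' : Summable (fun n => ∫ ω, ‖f n ω‖ ∂P) := by
    simpa only [hnorm] using hsum
  have hpt : ∀ ω, g (N ω) (Θ ω) = ∑' n, f n ω := by
    intro ω
    rw [tsum_eq_single (N ω)]
    · simp [f, s, Set.indicator_of_mem, Set.mem_setOf_eq]
    · intro k hk
      apply Set.indicator_of_notMem
      simp only [s, Set.mem_setOf_eq]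
      exact fun h => hk h.symm
  calc ∫ ω, g (N ω) (Θ ω) ∂P = ∫ ω, ∑' n, f n ω ∂P := by
        exact integral_congr_ae (Filter.Eventually.of_forall hpt)
    _ = ∑' n, ∫ ω, f n ω ∂P :=
        (integral_tsum_of_summable_integral_norm hfint hsum').symm
    _ = ∑' n, (P (s n)).toReal * ∫ ω, g n (Θ ω) ∂P := by
        apply tsum_congr; intro n
        rw [integral_indicator (hsmeas n)]
        exact setIntegral_indep_aux hN hind (hg n) (hgint n) n

/-- Abstract content of the paper's Lemma B.4: telescoping identity for the
inner product of the aggregation error with the gradient at a geometrically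
stopped iterate. -/
theorem error_inner_product_identity
    {Ω : Type*} {mΩ : MeasurableSpace Ω} (P : Measure Ω) [IsProbabilityMeasure P]
    {d : ℕ} (ℱ : ℕ → MeasurableSpace Ω)
    (hmono : Monotone ℱ) (hle : ∀ n, ℱ n ≤ mΩ)
    (θ : ℕ → Ω → EuclideanSpace ℝ (Fin d))
    (v : ℕ → Ω → EuclideanSpace ℝ (Fin d))
    (θ0 : EuclideanSpace ℝ (Fin d)) (η : ℝ) (hη : 0 < η)
    (hθ0 : ∀ ω, θ 0 ω = θ0)
    (hrec : ∀ n ω, θ (n + 1) ω = θ n ω + η • v n ω)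
    (hadapted : ∀ n, Measurable[ℱ n] (θ n))
    (hvmeas : ∀ n, Measurable[ℱ (n + 1)] (v n))
    (hvint : ∀ n, Integrable (v n) P)
    (F : EuclideanSpace ℝ (Fin d) → EuclideanSpace ℝ (Fin d))
    (hF : Measurable F) (e : EuclideanSpace ℝ (Fin d))
    (hcond : ∀ n, P[v n|ℱ n] =ᵐ[P] fun ω => F (θ n ω) + e)
    (B : ℝ) (hB : 1 ≤ B) (N : Ω → ℕ) (hNmeas : Measurable N)
    (hNgeom : ∀ n : ℕ,
      P {ω | N ω = n} = ENNReal.ofReal ((B / (B + 1)) ^ n * (1 - B / (B + 1))))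
    (hNindep : ProbabilityTheory.IndepFun N (fun ω => fun n => θ n ω) P)
    (hint1 : Summable fun n => (B / (B + 1)) ^ n * ∫ ω, ‖θ n ω - θ0‖ ∂P)
    (hint2 : Summable fun n => (B / (B + 1)) ^ n * ∫ ω, ‖F (θ n ω)‖ ∂P) :
    η * ∫ ω, ⟪e, F (θ (N ω) ω)⟫ ∂P =
      (1 / B) * ∫ ω, ⟪e, θ (N ω) ω - θ0⟫ ∂P - η * ‖e‖ ^ 2 := by
  have hB0 : (0:ℝ) < B := lt_of_lt_of_le one_pos hB
  have hB1 : (0:ℝ) < B + 1 := by linarith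
  set G : ℝ := B / (B + 1) with hG
  have hG0 : 0 ≤ G := div_nonneg hB0.le hB1.le
  have hG1 : G < 1 := by
    rw [hG, div_lt_one hB1]; linarith
  have hG1' : (0:ℝ) < 1 - G := by linarith
  -- measurability
  have hθmeas : ∀ n, Measurable (θ n) := fun n => (hadapted n).mono (hle n) le_rfl
  -- integrability of F ∘ θ n
  have hFint : ∀ n, Integrable (fun ω => F (θ n ω)) P := by
    intro n
    have h1 : Integrable (fun ω => F (θ n ω) + e) P :=
      (integrable_condExp).congr (hcond n)
    have h2 := h1.sub (integrable_const e)
    exact h2.congr (Filter.Eventually.of_forall (fun ω => by simp))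
  -- integrability of θ n - θ0
  have hθint : ∀ n, Integrable (fun ω => θ n ω - θ0) P := by
    intro n
    induction n with
    | zero =>
        exact (integrable_const (0 : EuclideanSpace ℝ (Fin d))).congr
          (Filter.Eventually.of_forall (fun ω => by simp [hθ0 ω]))
    | succ n ih =>
        have h2 := ih.add ((hvint n).smul η)
        exact h2.congr (Filter.Eventually.of_forall (fun ω => by
          simp [hrec n ω]; abel))
  -- abbreviations
  set b : ℕ → ℝ := fun n => ∫ ω, ⟪e, F (θ n ω)⟫ ∂P with hbdef
  set a : ℕ → ℝ := fun n => ∫ ω, ⟪e, θ n ω - θ0⟫ ∂P with hadef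
  set c : ℝ := ‖e‖ ^ 2 with hcdef
  -- recursion for a
  have hvinteg : ∀ n, ∫ ω, v n ω ∂P = (∫ ω, F (θ n ω) ∂P) + e := by
    intro n
    calc ∫ ω, v n ω ∂P = ∫ ω, (P[v n|ℱ n]) ω ∂P := (integral_condExp (hle n)).symm
      _ = ∫ ω, (F (θ n ω) + e) ∂P := integral_congr_ae (hcond n)
      _ = (∫ ω, F (θ n ω) ∂P) + ∫ _, e ∂P := integral_add (hFint n) (integrable_const e)
      _ = (∫ ω, F (θ n ω) ∂P) + e := by simp
  have hainz : a 0 = 0 := by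
    simp [hadef, hθ0]
  have harec : ∀ n, a (n + 1) = a n + η * (b n + c) := by
    intro n
    have hpt : ∀ ω, ⟪e, θ (n+1) ω - θ0⟫ = ⟪e, θ n ω - θ0⟫ + η * ⟪e, v n ω⟫ := by
      intro ω
      rw [hrec n ω]
      have : θ n ω + η • v n ω - θ0 = (θ n ω - θ0) + η • v n ω := by abel
      rw [this, inner_add_right, real_inner_smul_right]
    have hiv : ∫ ω, ⟪e, v n ω⟫ ∂P = b n + c := by
      rw [integral_inner (hvint n) e, hvinteg n, inner_add_right,
        ← integral_inner (hFint n) e, real_inner_self_eq_norm_sq]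
    calc a (n+1) = ∫ ω, (⟪e, θ n ω - θ0⟫ + η * ⟪e, v n ω⟫) ∂P :=
          integral_congr_ae (Filter.Eventually.of_forall hpt)
      _ = a n + ∫ ω, η * ⟪e, v n ω⟫ ∂P :=
          integral_add ((hθint n).const_inner e) (((hvint n).const_inner e).const_mul η)
      _ = a n + η * ∫ ω, ⟪e, v n ω⟫ ∂P := by rw [integral_const_mul]
      _ = a n + η * (b n + c) := by rw [hiv]
  -- bounds and summability
  have hbnd : ∀ (x : Ω → EuclideanSpace ℝ (Fin d)), Integrable x P →
      |∫ ω, ⟪e, x ω⟫ ∂P| ≤ ‖e‖ * ∫ ω, ‖x ω‖ ∂P := by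
    intro x hx
    calc |∫ ω, ⟪e, x ω⟫ ∂P| ≤ ∫ ω, |⟪e, x ω⟫| ∂P := by
          simpa [Real.norm_eq_abs] using
            norm_integral_le_integral_norm (μ := P) (fun ω => ⟪e, x ω⟫)
      _ ≤ ∫ ω, ‖e‖ * ‖x ω‖ ∂P := by
          apply integral_mono (hx.const_inner e).abs (hx.norm.const_mul ‖e‖)
          intro ω; exact abs_real_inner_le_norm e (x ω)
      _ = ‖e‖ * ∫ ω, ‖x ω‖ ∂P := integral_const_mul _ _
  have sB : Summable (fun n => G ^ n * b n) := by
    apply Summable.of_norm_bounded (hint2.mul_left ‖e‖)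
    intro n
    rw [Real.norm_eq_abs, abs_mul, abs_pow, abs_of_nonneg hG0]
    calc G ^ n * |b n| ≤ G ^ n * (‖e‖ * ∫ ω, ‖F (θ n ω)‖ ∂P) := by
          apply mul_le_mul_of_nonneg_left (hbnd _ (hFint n)) (pow_nonneg hG0 n)
      _ = ‖e‖ * (G ^ n * ∫ ω, ‖F (θ n ω)‖ ∂P) := by ring
  have sA : Summable (fun n => G ^ n * a n) := by
    apply Summable.of_norm_bounded (hint1.mul_left ‖e‖)
    intro n
    rw [Real.norm_eq_abs, abs_mul, abs_pow, abs_of_nonneg hG0]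
    calc G ^ n * |a n| ≤ G ^ n * (‖e‖ * ∫ ω, ‖θ n ω - θ0‖ ∂P) := by
          apply mul_le_mul_of_nonneg_left (hbnd _ (hθint n)) (pow_nonneg hG0 n)
      _ = ‖e‖ * (G ^ n * ∫ ω, ‖θ n ω - θ0‖ ∂P) := by ring
  have sgeom : Summable (fun n : ℕ => G ^ n) := summable_geometric_of_lt_one hG0 hG1
  set Sa : ℝ := ∑' n, G ^ n * a n with hSa
  set Sb : ℝ := ∑' n, G ^ n * b n with hSb
  -- telescoping identity
  have hkey : Sa = G * Sa + η * G * Sb + η * G * c * (1 - G)⁻¹ := by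
    have h1 : Sa = G ^ 0 * a 0 + ∑' n, G ^ (n+1) * a (n+1) := sA.tsum_eq_zero_add
    have h2 : ∀ n : ℕ, G ^ (n+1) * a (n+1)
        = G * (G ^ n * a n) + (η * G) * (G ^ n * b n) + (η * G * c) * G ^ n := by
      intro n; rw [harec n]; ring
    rw [hainz, mul_zero, zero_add] at h1
    have h3 : ∑' n, G ^ (n+1) * a (n+1)
        = G * Sa + η * G * Sb + η * G * c * (1 - G)⁻¹ := by
      rw [tsum_congr h2,
        Summable.tsum_add ((sA.mul_left G).add (sB.mul_left (η * G))) (sgeom.mul_left (η * G * c)),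
        Summable.tsum_add (sA.mul_left G) (sB.mul_left (η * G)),
        tsum_mul_left, tsum_mul_left, tsum_mul_left,
        tsum_geometric_of_lt_one hG0 hG1]
    linarith [h1, h3]
  -- probability values
  have hPn : ∀ n, (P {ω | N ω = n}).toReal = G ^ n * (1 - G) := by
    intro n
    rw [hNgeom n, ENNReal.toReal_ofReal (mul_nonneg (pow_nonneg hG0 n) hG1'.le)]
  -- the two integrals as series
  have hΘmeas : Measurable (fun ω => fun n => θ n ω) :=
    measurable_pi_lambda _ (fun n => hθmeas n)
  have I1 : ∫ ω, ⟪e, F (θ (N ω) ω)⟫ ∂P = (1 - G) * Sb := by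
    have := integral_comp_rand_index (Θ := fun ω => fun n => θ n ω) hNmeas hNindep
      (fun n x => ⟪e, F (x n)⟫)
      (fun n => measurable_const.inner (hF.comp (measurable_pi_apply n)))
      (fun n => (hFint n).const_inner e)
      (by
        apply Summable.of_nonneg_of_le
        · intro n
          exact mul_nonneg ENNReal.toReal_nonneg
            (integral_nonneg (fun ω => norm_nonneg _))
        · intro n
          show (P {ω | N ω = n}).toReal * ∫ ω, ‖⟪e, F (θ n ω)⟫‖ ∂P ≤
            ((1 - G) * ‖e‖) * (G ^ n * ∫ ω, ‖F (θ n ω)‖ ∂P)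
          rw [hPn n]
          have hle2 : ∫ ω, ‖⟪e, F (θ n ω)⟫‖ ∂P ≤ ‖e‖ * ∫ ω, ‖F (θ n ω)‖ ∂P := by
            calc ∫ ω, ‖⟪e, F (θ n ω)⟫‖ ∂P ≤ ∫ ω, ‖e‖ * ‖F (θ n ω)‖ ∂P := by
                  apply integral_mono ((hFint n).const_inner e).norm
                    ((hFint n).norm.const_mul ‖e‖)
                  intro ω
                  exact abs_real_inner_le_norm e _
              _ = ‖e‖ * ∫ ω, ‖F (θ n ω)‖ ∂P := integral_const_mul _ _
          calc G ^ n * (1 - G) * ∫ ω, ‖⟪e, F (θ n ω)⟫‖ ∂P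
              ≤ G ^ n * (1 - G) * (‖e‖ * ∫ ω, ‖F (θ n ω)‖ ∂P) := by
                apply mul_le_mul_of_nonneg_left hle2
                  (mul_nonneg (pow_nonneg hG0 n) hG1'.le)
            _ = ((1 - G) * ‖e‖) * (G ^ n * ∫ ω, ‖F (θ n ω)‖ ∂P) := by ring
        · exact hint2.mul_left ((1 - G) * ‖e‖))
    rw [this]
    rw [show (fun n => (P {ω | N ω = n}).toReal * ∫ ω, ⟪e, F (θ n ω)⟫ ∂P)
        = fun n => (1 - G) * (G ^ n * b n) from funext fun n => by rw [hPn n]; ring]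
    rw [tsum_mul_left]
  have I2 : ∫ ω, ⟪e, θ (N ω) ω - θ0⟫ ∂P = (1 - G) * Sa := by
    have := integral_comp_rand_index (Θ := fun ω => fun n => θ n ω) hNmeas hNindep
      (fun n x => ⟪e, x n - θ0⟫)
      (fun n => measurable_const.inner ((measurable_pi_apply n).sub measurable_const))
      (fun n => (hθint n).const_inner e)
      (by
        apply Summable.of_nonneg_of_le
        · intro n
          exact mul_nonneg ENNReal.toReal_nonneg
            (integral_nonneg (fun ω => norm_nonneg _))
        · intro n
          show (P {ω | N ω = n}).toReal * ∫ ω, ‖⟪e, θ n ω - θ0⟫‖ ∂P ≤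
            ((1 - G) * ‖e‖) * (G ^ n * ∫ ω, ‖θ n ω - θ0‖ ∂P)
          rw [hPn n]
          have hle2 : ∫ ω, ‖⟪e, θ n ω - θ0⟫‖ ∂P ≤ ‖e‖ * ∫ ω, ‖θ n ω - θ0‖ ∂P := by
            calc ∫ ω, ‖⟪e, θ n ω - θ0⟫‖ ∂P ≤ ∫ ω, ‖e‖ * ‖θ n ω - θ0‖ ∂P := by
                  apply integral_mono ((hθint n).const_inner e).norm
                    ((hθint n).norm.const_mul ‖e‖)
                  intro ω
                  exact abs_real_inner_le_norm e _
              _ = ‖e‖ * ∫ ω, ‖θ n ω - θ0‖ ∂P := integral_const_mul _ _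
          calc G ^ n * (1 - G) * ∫ ω, ‖⟪e, θ n ω - θ0⟫‖ ∂P
              ≤ G ^ n * (1 - G) * (‖e‖ * ∫ ω, ‖θ n ω - θ0‖ ∂P) := by
                apply mul_le_mul_of_nonneg_left hle2
                  (mul_nonneg (pow_nonneg hG0 n) hG1'.le)
            _ = ((1 - G) * ‖e‖) * (G ^ n * ∫ ω, ‖θ n ω - θ0‖ ∂P) := by ring
        · exact hint1.mul_left ((1 - G) * ‖e‖))
    rw [this]
    rw [show (fun n => (P {ω | N ω = n}).toReal * ∫ ω, ⟪e, θ n ω - θ0⟫ ∂P)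
        = fun n => (1 - G) * (G ^ n * a n) from funext fun n => by rw [hPn n]; ring]
    rw [tsum_mul_left]
  -- final algebra
  rw [I1, I2]
  have hSaval : (1 - G) * Sa = η * G * Sb + η * G * c * (1 - G)⁻¹ := by
    nlinarith [hkey]
  rw [hSaval]
  have hGB : G = B / (B + 1) := hG
  have h1G : 1 - G = 1 / (B + 1) := by rw [hGB, eq_div_iff hB1.ne', sub_mul, div_mul_cancel₀ _ hB1.ne']; ring
  have h1Ginv : (1 - G)⁻¹ = B + 1 := by rw [h1G]; simp
  rw [h1Ginv, h1G, hGB, hcdef]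
  field_simp
  ring
end

section
/- Let (Ω, 𝔉, P) be a probability space with filtration (𝔉ₙ)ₙ∈ℕ, and let (θₙ)ₙ∈ℕ be an adapted ℝ^d-valued process with θ₀ equal to a deterministic point θ⁰ ∈ ℝ^d and θ_{n+1} = θₙ + η·vₙ, where η > 0 and each vₙ is 𝔉_{n+1}-measurable and square-integrable. Let F : ℝ^d → ℝ^d be Borel measurable, e ∈ ℝ^d fixed, and C ≥ 0, and suppose that for every n, almost surely: E[vₙ | 𝔉ₙ] = F(θₙ) + e and E[‖vₙ‖² | 𝔉ₙ] ≤ C·‖θₙ − θ⁰‖² + 2·‖F(θₙ)‖² + 2·‖e‖². Let B ≥ 1 and let N be a ℕ-valued random variable geometrically distributed with parameter Γ = B/(B+1) (i.e., P(N = n) = Γⁿ·(1−Γ)), independent of the process (θₙ). Assume ∑ₙ Γⁿ·E‖θₙ − θ⁰‖² < ∞ and ∑ₙ Γⁿ·E‖F(θₙ)‖² < ∞. Then −2η·E⟨e, θ_N − θ⁰⟩ ≤ (−1/B + η²·C)·E‖θ_N − θ⁰‖² + 2η·E⟨F(θ_N), θ_N − θ⁰⟩ + 2η²·E‖F(θ_N)‖²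 + 2η²·‖e‖², where θ_N denotes the random vector ω ↦ θ_{N(ω)}(ω). -/
/-!
Write `a n = E‖θₙ - θ⁰‖²`. Expanding `‖(θₙ - θ⁰) + η vₙ‖²` and conditioning on `𝔉ₙ` (the
cross term through the self-adjointness of the L² conditional expectation) gives
`a (n+1) ≤ a n + 2η (E⟪F θₙ, θₙ - θ⁰⟫ + E⟪e, θₙ - θ⁰⟫) + η² (C a n + 2 E‖F θₙ‖² + 2‖e‖²)`.
Since `N` is independent of the process, `E g(θ_N) = ∑ₙ P(N = n) E g(θₙ)`. Multiply the step
inequality by `P(N = n) = Γⁿ (1 - Γ)` and sum: as `a 0 = 0`, the weights shift the left side to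
`Γ⁻¹ E‖θ_N - θ⁰‖²`, and `Γ⁻¹ - 1 = 1 / B`.
-/

open MeasureTheory RealInnerProductSpace ProbabilityTheory

namespace MeasureTheory

variable {Ω E : Type*} {m mΩ : MeasurableSpace Ω} {P : Measure Ω}
  [NormedAddCommGroup E] [InnerProductSpace ℝ E]

lemma MemLp.integrable_inner {f g : Ω → E} (hf : MemLp f 2 P) (hg : MemLp g 2 P) :
    Integrable (fun ω => ⟪f ω, g ω⟫) P :=
  (L2.integrable_inner (𝕜 := ℝ) (hf.toLp f) (hg.toLp g)).congr <| by
    filter_upwards [hf.coeFn_toLp, hg.coeFn_toLp] with ω hfω hgω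
    rw [hfω, hgω]

lemma integral_inner_condExp [IsFiniteMeasure P] [CompleteSpace E] (hm : m ≤ mΩ)
    {f g : Ω → E} (hf : MemLp f 2 P) (hg : MemLp g 2 P) (hgm : AEStronglyMeasurable[m] g P) :
    ∫ ω, ⟪g ω, (P[f|m]) ω⟫ ∂P = ∫ ω, ⟪g ω, f ω⟫ ∂P := by
  have h := inner_condExpL2_eq_inner_fun (𝕜 := ℝ) hm (hf.toLp f) (hg.toLp g)
    (hgm.congr hg.coeFn_toLp.symm)
  rw [L2.inner_def, L2.inner_def] at h
  calc ∫ ω, ⟪g ω, (P[f|m]) ω⟫ ∂P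
      = ∫ ω, ⟪(condExpL2 E ℝ hm (hf.toLp f) : Ω →₂[P] E) ω, hg.toLp g ω⟫ ∂P := by
        refine integral_congr_ae ?_
        filter_upwards [hg.coeFn_toLp, hf.condExpL2_ae_eq_condExp (𝕜 := ℝ) hm] with ω hgω hfω
        rw [hgω, hfω, real_inner_comm]
    _ = ∫ ω, ⟪hf.toLp f ω, hg.toLp g ω⟫ ∂P := h
    _ = ∫ ω, ⟪g ω, f ω⟫ ∂P := by
        refine integral_congr_ae ?_
        filter_upwards [hf.coeFn_toLp, hg.coeFn_toLp] with ω hfω hgω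
        rw [hfω, hgω, real_inner_comm]

lemma integral_norm_add_smul_sq {x v : Ω → E} (hx : MemLp x 2 P) (hv : MemLp v 2 P) (η : ℝ) :
    ∫ ω, ‖x ω + η • v ω‖ ^ 2 ∂P =
      ∫ ω, ‖x ω‖ ^ 2 ∂P + 2 * η * ∫ ω, ⟪x ω, v ω⟫ ∂P + η ^ 2 * ∫ ω, ‖v ω‖ ^ 2 ∂P := by
  have hx2 := (memLp_two_iff_integrable_sq_norm hx.1).1 hx
  have hv2 := (memLp_two_iff_integrable_sq_norm hv.1).1 hv
  have hxv := hx.integrable_inner hv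
  have hexp : ∀ ω, ‖x ω + η • v ω‖ ^ 2 =
      ‖x ω‖ ^ 2 + 2 * η * ⟪x ω, v ω⟫ + η ^ 2 * ‖v ω‖ ^ 2 := fun ω => by
    rw [norm_add_sq_real, real_inner_smul_right, norm_smul, mul_pow, Real.norm_eq_abs, sq_abs]
    ring
  simp_rw [hexp]
  rw [integral_add (hx2.fun_add (hxv.const_mul _)) (hv2.const_mul _),
    integral_add hx2 (hxv.const_mul _), integral_const_mul, integral_const_mul]


lemma integral_norm_add_smul_sq_le [IsProbabilityMeasure P] [CompleteSpace E] (hm : m ≤ mΩ)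
    {x y v : Ω → E} {e : E} {C : ℝ} (hx : MemLp x 2 P) (hxm : AEStronglyMeasurable[m] x P)
    (hy : MemLp y 2 P) (hv : MemLp v 2 P) (hvy : P[v|m] =ᵐ[P] fun ω => y ω + e)
    (hv2 : P[fun ω => ‖v ω‖ ^ 2|m] ≤ᵐ[P] fun ω => C * ‖x ω‖ ^ 2 + 2 * ‖y ω‖ ^ 2 + 2 * ‖e‖ ^ 2)
    (η : ℝ) :
    ∫ ω, ‖x ω + η • v ω‖ ^ 2 ∂P ≤ ∫ ω, ‖x ω‖ ^ 2 ∂P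
      + (2 * η * (∫ ω, ⟪y ω, x ω⟫ ∂P + ∫ ω, ⟪e, x ω⟫ ∂P)
        + η ^ 2 * (C * ∫ ω, ‖x ω‖ ^ 2 ∂P + 2 * ∫ ω, ‖y ω‖ ^ 2 ∂P + 2 * ‖e‖ ^ 2)) := by
  have hx2 := (memLp_two_iff_integrable_sq_norm hx.1).1 hx
  have hy2 := (memLp_two_iff_integrable_sq_norm hy.1).1 hy
  have hdrift : ∫ ω, ⟪x ω, v ω⟫ ∂P = ∫ ω, ⟪y ω, x ω⟫ ∂P + ∫ ω, ⟪e, x ω⟫ ∂P := by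
    rw [← integral_inner_condExp hm hv hx hxm, ← integral_add (hy.integrable_inner hx)
      ((memLp_const e).integrable_inner hx)]
    refine integral_congr_ae ?_
    filter_upwards [hvy] with ω hω
    rw [hω, inner_add_right, real_inner_comm, real_inner_comm e]
  have hsecond : ∫ ω, ‖v ω‖ ^ 2 ∂P ≤
      C * ∫ ω, ‖x ω‖ ^ 2 ∂P + 2 * ∫ ω, ‖y ω‖ ^ 2 ∂P + 2 * ‖e‖ ^ 2 := by
    calc ∫ ω, ‖v ω‖ ^ 2 ∂P = ∫ ω, (P[fun ω => ‖v ω‖ ^ 2|m]) ω ∂P := (integral_condExp hm).symm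
      _ ≤ ∫ ω, (C * ‖x ω‖ ^ 2 + 2 * ‖y ω‖ ^ 2 + 2 * ‖e‖ ^ 2) ∂P :=
        integral_mono_ae integrable_condExp
          (((hx2.const_mul C).fun_add (hy2.const_mul 2)).fun_add (integrable_const _)) hv2
      _ = _ := by
        rw [integral_add ((hx2.const_mul C).fun_add (hy2.const_mul 2)) (integrable_const _),
          integral_add (hx2.const_mul C) (hy2.const_mul 2), integral_const_mul,
          integral_const_mul, integral_const, probReal_univ, one_smul]
  rw [integral_norm_add_smul_sq hx hv, hdrift, add_assoc]
  gcongr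

end MeasureTheory

lemma iUnion_fiber_eq_univ {Ω ι : Type*} (N : Ω → ι) : ⋃ i, {ω | N ω = i} = Set.univ :=
  Set.iUnion_eq_univ_iff.2 fun ω => ⟨N ω, rfl⟩

section Stopped

variable {Ω ι E : Type*} {mΩ : MeasurableSpace Ω} {P : Measure Ω}
  [MeasurableSpace ι] [MeasurableSingletonClass ι] [MeasurableSpace E]
  {θ : ι → Ω → E} {N : Ω → ι}

lemma measurable_stopped [Countable ι] (hθ : ∀ i, Measurable (θ i)) (hN : Measurable N) :
    Measurable fun ω => θ (N ω) ω :=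
  (measurable_from_prod_countable_left hθ : Measurable fun p : Ω × ι => θ p.2 p.1).comp
    (measurable_id.prodMk hN)

lemma setIntegral_fiber_stopped (hθ : ∀ i, Measurable (θ i)) (hN : Measurable N)
    (hind : IndepFun N (fun ω i => θ i ω) P) {ψ : E → ℝ} (hψ : Measurable ψ) (i : ι) :
    ∫ ω in {ω | N ω = i}, ψ (θ (N ω) ω) ∂P = P.real {ω | N ω = i} * ∫ ω, ψ (θ i ω) ∂P := by
  refine (setIntegral_congr_fun (hN (measurableSet_singleton i))
    fun ω (hω : N ω = i) => by rw [hω]).trans ?_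
  exact ((IndepFun_iff_Indep _ _ _).1 hind).setIntegral_eq_mul (f := fun x => ψ (x i))
    hN.comap_le (measurable_pi_lambda _ hθ).aemeasurable ⟨{i}, measurableSet_singleton i, rfl⟩
    (by fun_prop : Measurable fun x : ι → E => ψ (x i)).aestronglyMeasurable

lemma integrable_stopped [Countable ι] (hθ : ∀ i, Measurable (θ i)) (hN : Measurable N)
    (hind : IndepFun N (fun ω i => θ i ω) P) {ψ : E → ℝ} (hψ : Measurable ψ)
    (hint : ∀ i, Integrable (fun ω => ψ (θ i ω)) P)
    (hsum : Summable fun i => P.real {ω | N ω = i} * ∫ ω, ‖ψ (θ i ω)‖ ∂P) :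
    Integrable (fun ω => ψ (θ (N ω) ω)) P := by
  rw [← integrableOn_univ, ← iUnion_fiber_eq_univ N]
  refine integrableOn_iUnion_of_summable_integral_norm (fun i => ?_) ?_
  · exact (hint i).integrableOn.congr_fun (fun ω (hω : N ω = i) => by rw [hω])
      (hN (measurableSet_singleton i))
  · simpa only [setIntegral_fiber_stopped hθ hN hind hψ.norm] using hsum

lemma hasSum_integral_stopped [Countable ι] (hθ : ∀ i, Measurable (θ i)) (hN : Measurable N)
    (hind : IndepFun N (fun ω i => θ i ω) P) {ψ : E → ℝ} (hψ : Measurable ψ)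
    (hint : Integrable (fun ω => ψ (θ (N ω) ω)) P) :
    HasSum (fun i => P.real {ω | N ω = i} * ∫ ω, ψ (θ i ω) ∂P) (∫ ω, ψ (θ (N ω) ω) ∂P) := by
  have h := hasSum_integral_iUnion (s := fun i => {ω | N ω = i})
    (fun i => hN (measurableSet_singleton i)) (pairwise_disjoint_fiber N)
    (by rw [iUnion_fiber_eq_univ N]; exact hint.integrableOn)
  simpa only [setIntegral_fiber_stopped hθ hN hind hψ, iUnion_fiber_eq_univ N,
    Measure.restrict_univ] using h

lemma memLp_two_stopped [Countable ι] {G : Type*} [NormedAddCommGroup G]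
    (hθ : ∀ i, Measurable (θ i)) (hN : Measurable N) (hind : IndepFun N (fun ω i => θ i ω) P)
    {ψ : E → G} (hψ : StronglyMeasurable ψ) (hL2 : ∀ i, MemLp (fun ω => ψ (θ i ω)) 2 P)
    (hsum : Summable fun i => P.real {ω | N ω = i} * ∫ ω, ‖ψ (θ i ω)‖ ^ 2 ∂P) :
    MemLp (fun ω => ψ (θ (N ω) ω)) 2 P := by
  refine (memLp_two_iff_integrable_sq_norm
    (hψ.comp_measurable (measurable_stopped hθ hN)).aestronglyMeasurable).2 ?_
  refine integrable_stopped hθ hN hind (hψ.norm.measurable.pow_const 2)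
    (fun i => (memLp_two_iff_integrable_sq_norm (hL2 i).1).1 (hL2 i)) ?_
  simpa only [norm_pow, norm_norm] using hsum

end Stopped

lemma inv_sub_one_mul_le_of_step_le {Γ : ℝ} (hΓ : 0 < Γ) {w a r : ℕ → ℝ} {A R : ℝ}
    (hw0 : ∀ n, 0 ≤ w n) (hw : ∀ n, w (n + 1) = Γ * w n) (ha0 : a 0 = 0)
    (hstep : ∀ n, a (n + 1) ≤ a n + r n)
    (hA : HasSum (fun n => w n * a n) A) (hR : HasSum (fun n => w n * r n) R) :
    (Γ⁻¹ - 1) * A ≤ R := by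
  have hshift : HasSum (fun n => w n * a (n + 1)) (Γ⁻¹ * A) := by
    have h := (hasSum_nat_add_iff' 1).2 hA
    simp only [Finset.range_one, Finset.sum_singleton, ha0, mul_zero, sub_zero] at h
    rw [show (fun n => w n * a (n + 1)) = fun n => Γ⁻¹ * (w (n + 1) * a (n + 1)) from
      funext fun n => by rw [hw, ← mul_assoc, inv_mul_cancel_left₀ hΓ.ne']]
    exact h.mul_left Γ⁻¹
  have := hasSum_le (fun n => by nlinarith [hstep n, hw0 n]) hshift (hA.add hR)
  linarith

section GeometricStopping

variable {Ω E : Type*} {mΩ : MeasurableSpace Ω} {P : Measure Ω} [IsProbabilityMeasure P]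
  [NormedAddCommGroup E] [InnerProductSpace ℝ E] [MeasurableSpace E] [BorelSpace E]
  [SecondCountableTopology E]

lemma geometric_stopping_bound {Γ : ℝ} (hΓ0 : 0 < Γ) {θ : ℕ → Ω → E} {N : Ω → ℕ}
    (hθ : ∀ n, Measurable (θ n)) (hN : Measurable N) (hind : IndepFun N (fun ω n => θ n ω) P)
    (hNgeom : ∀ n, P.real {ω | N ω = n} = Γ ^ n * (1 - Γ))
    {θ0 : E} (hθ0 : ∀ ω, θ 0 ω = θ0) {F : E → E} (hF : Measurable F) {e : E} {η C : ℝ}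
    (hx : ∀ n, MemLp (fun ω => θ n ω - θ0) 2 P) (hFθ : ∀ n, MemLp (fun ω => F (θ n ω)) 2 P)
    (hstep : ∀ n, ∫ ω, ‖θ (n + 1) ω - θ0‖ ^ 2 ∂P ≤ ∫ ω, ‖θ n ω - θ0‖ ^ 2 ∂P
      + (2 * η * (∫ ω, ⟪F (θ n ω), θ n ω - θ0⟫ ∂P + ∫ ω, ⟪e, θ n ω - θ0⟫ ∂P)
        + η ^ 2 * (C * ∫ ω, ‖θ n ω - θ0‖ ^ 2 ∂P + 2 * ∫ ω, ‖F (θ n ω)‖ ^ 2 ∂P + 2 * ‖e‖ ^ 2)))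
    (hint1 : Summable fun n => Γ ^ n * ∫ ω, ‖θ n ω - θ0‖ ^ 2 ∂P)
    (hint2 : Summable fun n => Γ ^ n * ∫ ω, ‖F (θ n ω)‖ ^ 2 ∂P) :
    (Γ⁻¹ - 1) * ∫ ω, ‖θ (N ω) ω - θ0‖ ^ 2 ∂P ≤
      2 * η * (∫ ω, ⟪F (θ (N ω) ω), θ (N ω) ω - θ0⟫ ∂P + ∫ ω, ⟪e, θ (N ω) ω - θ0⟫ ∂P)
        + η ^ 2 * (C * ∫ ω, ‖θ (N ω) ω - θ0‖ ^ 2 ∂P + 2 * ∫ ω, ‖F (θ (N ω) ω)‖ ^ 2 ∂P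
          + 2 * ‖e‖ ^ 2) := by
  have hweight {g : ℕ → ℝ} (hg : Summable fun n => Γ ^ n * g n) :
      Summable fun n => P.real {ω | N ω = n} * g n :=
    (hg.mul_right (1 - Γ)).congr fun n => by rw [hNgeom]; ring
  have hxN := memLp_two_stopped hθ hN hind (ψ := fun x => x - θ0) (by fun_prop) hx
    (hweight hint1)
  have hFN := memLp_two_stopped hθ hN hind hF.stronglyMeasurable hFθ (hweight hint2)
  have hS {ψ} (hψ) := hasSum_integral_stopped hθ hN hind (ψ := ψ) hψ
  have hA := hS (ψ := fun x => ‖x - θ0‖ ^ 2) (by fun_prop)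
    ((memLp_two_iff_integrable_sq_norm hxN.1).1 hxN)
  have hFF := hS (ψ := fun x => ‖F x‖ ^ 2) (by fun_prop)
    ((memLp_two_iff_integrable_sq_norm hFN.1).1 hFN)
  have hFA := hS (ψ := fun x => ⟪F x, x - θ0⟫) (by fun_prop) (hFN.integrable_inner hxN)
  have heA := hS (ψ := fun x => ⟪e, x - θ0⟫) (by fun_prop) ((memLp_const e).integrable_inner hxN)
  have hone : HasSum (fun n => P.real {ω | N ω = n}) 1 := by
    simpa using hS (ψ := fun _ => (1 : ℝ)) measurable_const (integrable_const 1)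
  simpa using inv_sub_one_mul_le_of_step_le (w := fun n => P.real {ω | N ω = n}) hΓ0
    (fun n => measureReal_nonneg) (fun n => by simp only [hNgeom]; ring) (by simp [hθ0]) hstep hA
    ((((hFA.add heA).mul_left (2 * η)).add ((((hA.mul_left C).add (hFF.mul_left 2)).add
      (hone.mul_left (2 * ‖e‖ ^ 2))).mul_left (η ^ 2))).congr_fun fun n => by ring)

end GeometricStopping

theorem error_displacement_bound_general
    {Ω : Type*} {mΩ : MeasurableSpace Ω} (P : Measure Ω) [IsProbabilityMeasure P]
    {d : ℕ} (ℱ : ℕ → MeasurableSpace Ω)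
    (hle : ∀ n, ℱ n ≤ mΩ)
    (θ : ℕ → Ω → EuclideanSpace ℝ (Fin d))
    (v : ℕ → Ω → EuclideanSpace ℝ (Fin d))
    (θ0 : EuclideanSpace ℝ (Fin d)) (η : ℝ)
    (hθ0 : ∀ ω, θ 0 ω = θ0)
    (hrec : ∀ n ω, θ (n + 1) ω = θ n ω + η • v n ω)
    (hadapted : ∀ n, Measurable[ℱ n] (θ n))
    (hvL2 : ∀ n, MemLp (v n) 2 P)
    (F : EuclideanSpace ℝ (Fin d) → EuclideanSpace ℝ (Fin d))
    (hF : Measurable F) (e : EuclideanSpace ℝ (Fin d)) (C : ℝ)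
    (hcond : ∀ n, P[v n|ℱ n] =ᵐ[P] fun ω => F (θ n ω) + e)
    (hcond2 : ∀ n, ∀ᵐ ω ∂P,
      MeasureTheory.condExp (ℱ n) P (fun ω' => ‖v n ω'‖ ^ 2) ω ≤
        C * ‖θ n ω - θ0‖ ^ 2 + 2 * ‖F (θ n ω)‖ ^ 2 + 2 * ‖e‖ ^ 2)
    (B : ℝ) (hB : 1 ≤ B) (N : Ω → ℕ) (hNmeas : Measurable N)
    (hNgeom : ∀ n : ℕ,
      P {ω | N ω = n} = ENNReal.ofReal ((B / (B + 1)) ^ n * (1 - B / (B + 1))))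
    (hNindep : ProbabilityTheory.IndepFun N (fun ω => fun n => θ n ω) P)
    (hint1 : Summable fun n => (B / (B + 1)) ^ n * ∫ ω, ‖θ n ω - θ0‖ ^ 2 ∂P)
    (hint2 : Summable fun n => (B / (B + 1)) ^ n * ∫ ω, ‖F (θ n ω)‖ ^ 2 ∂P) :
    -2 * η * ∫ ω, ⟪e, θ (N ω) ω - θ0⟫ ∂P ≤
      (-(1 / B) + η ^ 2 * C) * ∫ ω, ‖θ (N ω) ω - θ0‖ ^ 2 ∂P +
        2 * η * ∫ ω, ⟪F (θ (N ω) ω), θ (N ω) ω - θ0⟫ ∂P +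
        2 * η ^ 2 * ∫ ω, ‖F (θ (N ω) ω)‖ ^ 2 ∂P + 2 * η ^ 2 * ‖e‖ ^ 2 := by
  have hB0 : 0 < B := by linarith
  set Γ := B / (B + 1) with hΓ
  have hΓ1 : Γ < 1 := (div_lt_one (by linarith)).2 (lt_add_one B)
  have hw : ∀ n, P.real {ω | N ω = n} = Γ ^ n * (1 - Γ) := fun n => by
    rw [measureReal_def, hNgeom, ENNReal.toReal_ofReal (mul_nonneg (by positivity) (by linarith))]
  have hθm : ∀ n, Measurable (θ n) := fun n => (hadapted n).mono (hle n) le_rfl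
  have hx : ∀ n, MemLp (fun ω => θ n ω - θ0) 2 P := by
    intro n
    induction n with
    | zero => simp [hθ0]
    | succ n ih =>
      rw [show (fun ω => θ (n + 1) ω - θ0) = (fun ω => θ n ω - θ0) + η • v n from
        funext fun ω => by simp [hrec, add_sub_right_comm]]
      exact ih.add ((hvL2 n).const_smul η)
  have hFθ : ∀ n, MemLp (fun ω => F (θ n ω)) 2 P := fun n => by
    simpa [Pi.sub_def] using (((hvL2 n).condExp one_le_two).ae_eq (hcond n)).sub (memLp_const e)
  have hstep := fun n => integral_norm_add_smul_sq_le (hle n) (hx n)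
    ((hadapted n).sub measurable_const).aestronglyMeasurable (hFθ n) (hvL2 n) (hcond n) (hcond2 n) η
  simp only [← add_sub_right_comm, ← hrec] at hstep
  have key := geometric_stopping_bound (by positivity) hθm hNmeas hNindep hw hθ0 hF hx hFθ hstep
    hint1 hint2
  rw [show Γ⁻¹ - 1 = 1 / B by rw [hΓ, inv_div]; field_simp; ring] at key
  linarith

/-- Abstract content of the paper's Lemma B.5: bound on the expected inner
product of the aggregation error with the displacement of a geometrically
stopped semi-stochastic gradient iterate. -/
theorem error_displacement_bound
    {Ω : Type*} {mΩ : MeasurableSpace Ω} (P : Measure Ω) [IsProbabilityMeasure P]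
    {d : ℕ} (ℱ : ℕ → MeasurableSpace Ω)
    (hmono : Monotone ℱ) (hle : ∀ n, ℱ n ≤ mΩ)
    (θ : ℕ → Ω → EuclideanSpace ℝ (Fin d))
    (v : ℕ → Ω → EuclideanSpace ℝ (Fin d))
    (θ0 : EuclideanSpace ℝ (Fin d)) (η : ℝ) (hη : 0 < η)
    (hθ0 : ∀ ω, θ 0 ω = θ0)
    (hrec : ∀ n ω, θ (n + 1) ω = θ n ω + η • v n ω)
    (hadapted : ∀ n, Measurable[ℱ n] (θ n))
    (hvmeas : ∀ n, Measurable[ℱ (n + 1)] (v n))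
    (hvL2 : ∀ n, MemLp (v n) 2 P)
    (F : EuclideanSpace ℝ (Fin d) → EuclideanSpace ℝ (Fin d))
    (hF : Measurable F) (e : EuclideanSpace ℝ (Fin d)) (C : ℝ) (hC : 0 ≤ C)
    (hcond : ∀ n, P[v n|ℱ n] =ᵐ[P] fun ω => F (θ n ω) + e)
    (hcond2 : ∀ n, ∀ᵐ ω ∂P,
      MeasureTheory.condExp (ℱ n) P (fun ω' => ‖v n ω'‖ ^ 2) ω ≤
        C * ‖θ n ω - θ0‖ ^ 2 + 2 * ‖F (θ n ω)‖ ^ 2 + 2 * ‖e‖ ^ 2)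
    (B : ℝ) (hB : 1 ≤ B) (N : Ω → ℕ) (hNmeas : Measurable N)
    (hNgeom : ∀ n : ℕ,
      P {ω | N ω = n} = ENNReal.ofReal ((B / (B + 1)) ^ n * (1 - B / (B + 1))))
    (hNindep : ProbabilityTheory.IndepFun N (fun ω => fun n => θ n ω) P)
    (hint1 : Summable fun n => (B / (B + 1)) ^ n * ∫ ω, ‖θ n ω - θ0‖ ^ 2 ∂P)
    (hint2 : Summable fun n => (B / (B + 1)) ^ n * ∫ ω, ‖F (θ n ω)‖ ^ 2 ∂P) :
    -2 * η * ∫ ω, ⟪e, θ (N ω) ω - θ0⟫ ∂P ≤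
      (-(1 / B) + η ^ 2 * C) * ∫ ω, ‖θ (N ω) ω - θ0‖ ^ 2 ∂P +
        2 * η * ∫ ω, ⟪F (θ (N ω) ω), θ (N ω) ω - θ0⟫ ∂P +
        2 * η ^ 2 * ∫ ω, ‖F (θ (N ω) ω)‖ ^ 2 ∂P + 2 * η ^ 2 * ‖e‖ ^ 2 :=
  error_displacement_bound_general P ℱ hle θ v θ0 η hθ0 hrec hadapted hvL2 F hF e C hcond hcond2 B
    hB N hNmeas hNgeom hNindep hint1 hint2
end
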